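/- For every v = (v₁, v₂, v₃) ∈ ℝ³, the matrices 1 − v̂/2 and 1 + v̂/2 (with v̂ the se(2) hat of v) are invertible, and the Cayley map on se(2) is given explicitly by cay(v̂) = (1 − v̂/2)⁻¹ (1 + v̂/2) = the 3×3 matrix whose first two rows are (1/(4 + v₁²)) · [[4 − v₁², −4 v₁, −2 v₁ v₃ + 4 v₂], [4 v₁, 4 − v₁², 2 v₁ v₂ + 4 v₃]] and whose third row is (0, 0, 1). -/
import Mathlib


/-- The `se(2)` hat map. -/
def hatSE2 (v : Fin 3 → ℝ) : Matrix (Fin 3) (Fin 3) ℝ :=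
  !![0, -v 0, v 1; v 0, 0, v 2; 0, 0, 0]

/-- The Cayley map `cay(x) = (1 − x/2)⁻¹ (1 + x/2)` on square matrices. -/
noncomputable def cay {n : ℕ} (x : Matrix (Fin n) (Fin n) ℝ) :
    Matrix (Fin n) (Fin n) ℝ :=
  (1 - (2⁻¹ : ℝ) • x)⁻¹ * (1 + (2⁻¹ : ℝ) • x)

/-- **Explicit Cayley map on `se(2)`:** the matrices `1 ± v̂/2` are invertible
and `cay(v̂)` is given by the explicit `SE(2)` matrix. -/
theorem cayley_se2_explicit (v : Fin 3 → ℝ) :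
    IsUnit (1 - (2⁻¹ : ℝ) • hatSE2 v) ∧ IsUnit (1 + (2⁻¹ : ℝ) • hatSE2 v)
    ∧ cay (hatSE2 v)
      = !![(4 - v 0 ^ 2) / (4 + v 0 ^ 2), (-(4 * v 0)) / (4 + v 0 ^ 2),
            (-(2 * v 0 * v 2) + 4 * v 1) / (4 + v 0 ^ 2);
          (4 * v 0) / (4 + v 0 ^ 2), (4 - v 0 ^ 2) / (4 + v 0 ^ 2),
            (2 * v 0 * v 1 + 4 * v 2) / (4 + v 0 ^ 2);
          0, 0, 1] := by
  have hden : (4 : ℝ) + v 0 ^ 2 ≠ 0 := by positivity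
  have hA : (1 - (2⁻¹ : ℝ) • hatSE2 v)
      = !![1, 2⁻¹ * v 0, -(2⁻¹ * v 1); -(2⁻¹ * v 0), 1, -(2⁻¹ * v 2); 0, 0, 1] := by
    ext i j
    fin_cases i <;> fin_cases j <;>
      simp [hatSE2, Matrix.one_apply, Matrix.vecHead, Matrix.vecTail] <;> ring
  have hB : (1 + (2⁻¹ : ℝ) • hatSE2 v)
      = !![1, -(2⁻¹ * v 0), 2⁻¹ * v 1; 2⁻¹ * v 0, 1, 2⁻¹ * v 2; 0, 0, 1] := by
    ext i j
    fin_cases i <;> fin_cases j <;>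
      simp [hatSE2, Matrix.one_apply, Matrix.vecHead, Matrix.vecTail] <;> ring
  have hdetA : (1 - (2⁻¹ : ℝ) • hatSE2 v).det ≠ 0 := by
    have : (1 - (2⁻¹ : ℝ) • hatSE2 v).det = 1 + 4⁻¹ * v 0 ^ 2 := by
      rw [hA, Matrix.det_fin_three]
      simp [Matrix.vecHead, Matrix.vecTail]
      ring
    rw [this]; positivity
  have hdetB : (1 + (2⁻¹ : ℝ) • hatSE2 v).det ≠ 0 := by
    have : (1 + (2⁻¹ : ℝ) • hatSE2 v).det = 1 + 4⁻¹ * v 0 ^ 2 := by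
      rw [hB, Matrix.det_fin_three]
      simp [Matrix.vecHead, Matrix.vecTail]
      ring
    rw [this]; positivity
  refine ⟨(Matrix.isUnit_iff_isUnit_det _).2 (isUnit_iff_ne_zero.2 hdetA),
    (Matrix.isUnit_iff_isUnit_det _).2 (isUnit_iff_ne_zero.2 hdetB), ?_⟩
  set M : Matrix (Fin 3) (Fin 3) ℝ :=
    !![(4 - v 0 ^ 2) / (4 + v 0 ^ 2), (-(4 * v 0)) / (4 + v 0 ^ 2),
        (-(2 * v 0 * v 2) + 4 * v 1) / (4 + v 0 ^ 2);
      (4 * v 0) / (4 + v 0 ^ 2), (4 - v 0 ^ 2) / (4 + v 0 ^ 2),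
        (2 * v 0 * v 1 + 4 * v 2) / (4 + v 0 ^ 2);
      0, 0, 1] with hM
  have key : (1 - (2⁻¹ : ℝ) • hatSE2 v) * M = (1 + (2⁻¹ : ℝ) • hatSE2 v) := by
    rw [hA, hB, hM]
    ext i j
    fin_cases i <;> fin_cases j <;>
      simp [Matrix.mul_apply, Fin.sum_univ_three] <;> field_simp <;> ring
  calc cay (hatSE2 v) = (1 - (2⁻¹ : ℝ) • hatSE2 v)⁻¹ *
        ((1 - (2⁻¹ : ℝ) • hatSE2 v) * M) := by rw [cay, key]
    _ = M := by rw [← Matrix.mul_assoc, Matrix.nonsing_inv_mul _ (isUnit_iff_ne_zero.2 hdetA), Matrix.one_mul]
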